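/- Let h ∈ 𝕃 with deg h = −1 and let f ∈ 𝕃 ∖ 𝔽_q(t) with A_1 = [1/f] and m = −deg f. Then the matrix product M_h(f)·M_h(F_h(f))·⋯·M_h(F_h^{m}(f)) equals the 2×2 matrix with rows (0, 1) and (1, A_1). -/

import Mathlib

/-!
Setting: `q` a prime power is formalized as `q = Fintype.card Fq` for a finite field `Fq`.
The field `K = 𝔽_q((t⁻¹))` of formal Laurent series in `t⁻¹` is realized as
`LaurentSeries Fq = 𝔽_q((X))` with `X = t⁻¹` (so `deg f = -(X-adic order of f)`).
-/

open scoped Classical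
open MeasureTheory Filter
open scoped ENNReal

noncomputable section

variable (Fq : Type) [Field Fq] [Fintype Fq]

/-- `t ∈ K = 𝔽_q((t⁻¹))`, realized as the inverse of the variable `X` of
`LaurentSeries Fq`. -/
def tvar : LaurentSeries Fq := (HahnSeries.single (1 : ℤ) (1 : Fq))⁻¹

/-- The degree `deg f ∈ ℤ ∪ {-∞}` of `f ∈ K`, with `deg 0 = ⊥ = -∞`. -/
def fdeg (f : LaurentSeries Fq) : WithBot ℤ :=
  if f = 0 then ⊥ else ((-f.order : ℤ) : WithBot ℤ)

/-- The absolute value `|f| = q^(deg f)`, with `|0| = 0`. -/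
def fabs (f : LaurentSeries Fq) : ℝ :=
  if f = 0 then 0 else (Fintype.card Fq : ℝ) ^ (-f.order)

/-- Keep only the part of `f` with `X`-exponents `≤ N`, i.e. `t`-exponents `≥ -N`. -/
def cutoff (N : ℤ) (f : LaurentSeries Fq) : LaurentSeries Fq where
  coeff j := if j ≤ N then f.coeff j else 0
  isPWO_support' := f.isPWO_support'.mono (by
    intro j hj
    by_cases hN : j ≤ N
    · simpa [Function.mem_support, hN] using hj
    · simp [Function.mem_support, hN] at hj)

/-- The polynomial part `[f] ∈ 𝔽_q[t]` of `f` (the part with `t`-exponents `≥ 0`). -/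
def polyPart (f : LaurentSeries Fq) : LaurentSeries Fq := cutoff Fq 0 f

/-- The fractional part `{f} = f - [f]`. -/
def fracPart (f : LaurentSeries Fq) : LaurentSeries Fq := f - polyPart Fq f

/-- `𝒪 = {f ∈ K : |f| ≤ 1}`. -/
def setO : Set (LaurentSeries Fq) := {f | fabs Fq f ≤ 1}

/-- `𝕃 = {f ∈ K : |f| < 1}`. -/
def setL : Set (LaurentSeries Fq) := {f | fabs Fq f < 1}

/-- `𝕁₀ = {f ∈ 𝒪 : deg f = 0}`. -/
def setJ0 : Set (LaurentSeries Fq) := {f | fdeg Fq f = ((0 : ℤ) : WithBot ℤ)}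

/-- The embedding `𝔽_q[t] → K`, sending a polynomial `P` to `P(t)`. -/
def polyT (P : Polynomial Fq) : LaurentSeries Fq := Polynomial.aeval (tvar Fq) P

/-- The subfield `𝔽_q(t) ⊆ K` of rational functions (as a subset). -/
def ratSet : Set (LaurentSeries Fq) :=
  {g | ∃ P Q : Polynomial Fq, Q ≠ 0 ∧ g = polyT Fq P / polyT Fq Q}

/-- The Artin map `Ψ(f) = {1/f}`. -/
def artin (f : LaurentSeries Fq) : LaurentSeries Fq := fracPart Fq f⁻¹

/-- The partial quotients `A_n = [1/Ψ^{n-1}(f)]` (`n ≥ 1`). -/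
def pquot (f : LaurentSeries Fq) (n : ℕ) : LaurentSeries Fq :=
  polyPart Fq (((artin Fq)^[n - 1] f)⁻¹)

/-- `convPQ f (k+1) = (P_k, Q_k)`, the principal convergents;
`convPQ f 0 = (P_{-1}, Q_{-1}) = (1, 0)`, `convPQ f 1 = (P_0, Q_0) = (0, 1)`. -/
def convPQ (f : LaurentSeries Fq) : ℕ → LaurentSeries Fq × LaurentSeries Fq
  | 0 => (1, 0)
  | 1 => (0, 1)
  | (n + 2) => (pquot Fq f (n + 1) * (convPQ f (n + 1)).1 + (convPQ f n).1,
                pquot Fq f (n + 1) * (convPQ f (n + 1)).2 + (convPQ f n).2)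

/-- `Pc f (k+1) = P_k`. -/
def Pc (f : LaurentSeries Fq) (n : ℕ) : LaurentSeries Fq := (convPQ Fq f n).1

/-- `Qc f (k+1) = Q_k`. -/
def Qc (f : LaurentSeries Fq) (n : ℕ) : LaurentSeries Fq := (convPQ Fq f n).2

/-- The geometric Farey map `F` on `𝕃 × ℤ`. -/
def fareyGeom (p : LaurentSeries Fq × ℤ) : LaurentSeries Fq × ℤ :=
  if fdeg Fq p.1 < ((-1 : ℤ) : WithBot ℤ) ∨ p.2 < 0 then
    (fracPart Fq (tvar Fq * p.1), p.2 + 1)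
  else
    (fracPart Fq ((tvar Fq * p.1)⁻¹), -(p.2 + 1))

/-- The algebraic Farey map `F_h` associated to `h`. -/
def fareyAlg (h : LaurentSeries Fq) (f : LaurentSeries Fq) : LaurentSeries Fq :=
  if fdeg Fq f = ((0 : ℤ) : WithBot ℤ) then
    (1 - polyPart Fq ((1 - h) * f⁻¹) * f) / f
  else
    f / (1 - polyPart Fq ((1 - h) * f⁻¹) * f)

/-- The matrix `M(f, n)` associated to the geometric Farey map. -/
def geomMat (p : LaurentSeries Fq × ℤ) : Matrix (Fin 2) (Fin 2) (LaurentSeries Fq) :=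
  if p.2 < 0 then
    !![(tvar Fq)⁻¹, (tvar Fq)⁻¹ * polyPart Fq (tvar Fq * p.1); 0, 1]
  else if fdeg Fq p.1 = ((-1 : ℤ) : WithBot ℤ) then
    !![0, 1; tvar Fq, tvar Fq * polyPart Fq ((tvar Fq * p.1)⁻¹)]
  else
    !![1, 0; 0, tvar Fq]

/-- The matrix `M_h(f)` associated to the algebraic Farey map `F_h`. -/
def algMat (h : LaurentSeries Fq) (f : LaurentSeries Fq) :
    Matrix (Fin 2) (Fin 2) (LaurentSeries Fq) :=
  if fdeg Fq f = ((0 : ℤ) : WithBot ℤ) then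
    !![0, 1; 1, polyPart Fq ((1 - h) * f⁻¹)]
  else
    !![1, 0; polyPart Fq ((1 - h) * f⁻¹), 1]

/-- The leading term `LT(f)` of `f`. -/
def leadTerm (f : LaurentSeries Fq) : LaurentSeries Fq :=
  HahnSeries.single f.order (f.coeff f.order)

/-- `G(f) = 1/f - 1/LT(f)`. -/
def Gmap (f : LaurentSeries Fq) : LaurentSeries Fq := f⁻¹ - (leadTerm Fq f)⁻¹

/-- The Farey map `F_𝕁` of Berthé–Nakada–Natsui. -/
def fareyBNN (f : LaurentSeries Fq) : LaurentSeries Fq :=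
  if ((0 : ℤ) : WithBot ℤ) ≤ fdeg Fq (Gmap Fq f) then (Gmap Fq f)⁻¹
  else f⁻¹ - polyPart Fq f⁻¹

/-- The Borel measurable structure on `K`, for the valued-field topology. -/
instance : MeasurableSpace (LaurentSeries Fq) := borel _
instance : BorelSpace (LaurentSeries Fq) := ⟨rfl⟩

/-!
Write `a = [(1 - h) f⁻¹]`. When `deg f = -(m + 1) < 0`, the identity `a f = 1 - h - {(1 - h) f⁻¹} f`
shows that `1 - a f` differs from `h` by a term of degree `≤ -2`, so it has degree `-1`; hence
`F_h(f) = f / (1 - a f)` has degree `-m` and `1 / F_h(f) = 1 / f - a`, so `[1 / F_h(f)] = A_1 - a`.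
The shear `M_h(f) = [[1, 0], [a, 1]]` turns `[[0, 1], [1, A_1 - a]]` into `[[0, 1], [1, A_1]]`,
so the claim follows by induction on `m`. For `m = 0` only the last matrix remains, and
`[(1 - h) f⁻¹] = [f⁻¹]` because `h f⁻¹` has degree `-1`.
-/

section

variable {K : Type} [Field K]

theorem LaurentSeries.orderTop_inv {f : LaurentSeries K} {n : ℤ}
    (hf : f.orderTop = n) : f⁻¹.orderTop = ((-n : ℤ) : WithTop ℤ) := by
  have hf0 : f ≠ 0 := HahnSeries.orderTop_ne_top.1 (by simp [hf])
  have hmul := HahnSeries.orderTop_mul f f⁻¹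
  rw [mul_inv_cancel₀ hf0, HahnSeries.orderTop_one, hf,
    ← HahnSeries.order_eq_orderTop_of_ne_zero (inv_ne_zero hf0)] at hmul
  rw [← HahnSeries.order_eq_orderTop_of_ne_zero (inv_ne_zero hf0), WithTop.coe_inj]
  have : 0 = n + f⁻¹.order := by exact_mod_cast hmul
  omega

theorem fdeg_eq_coe_iff {f : LaurentSeries K} {n : ℤ} :
    fdeg K f = (n : WithBot ℤ) ↔ f.orderTop = ((-n : ℤ) : WithTop ℤ) := by
  by_cases hf : f = 0
  · simp only [fdeg, hf, HahnSeries.orderTop_zero]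
    exact ⟨fun h => (WithBot.bot_ne_coe h).elim, fun h => (WithTop.top_ne_coe h).elim⟩
  · rw [fdeg, if_neg hf, ← HahnSeries.order_eq_orderTop_of_ne_zero hf, WithBot.coe_inj,
      WithTop.coe_inj]
    omega

theorem fdeg_eq_zero_iff {f : LaurentSeries K} :
    fdeg K f = ((0 : ℤ) : WithBot ℤ) ↔ f.orderTop = 0 :=
  fdeg_eq_coe_iff.trans (by simp)

theorem polyPart_coeff (f : LaurentSeries K) (j : ℤ) :
    (polyPart K f).coeff j = if j ≤ 0 then f.coeff j else 0 := rfl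

theorem polyPart_sub (f g : LaurentSeries K) :
    polyPart K (f - g) = polyPart K f - polyPart K g := by
  ext j
  simp only [polyPart_coeff, HahnSeries.coeff_sub]
  split_ifs <;> simp

theorem polyPart_polyPart (f : LaurentSeries K) :
    polyPart K (polyPart K f) = polyPart K f := by
  ext j
  simp only [polyPart_coeff]
  split_ifs <;> rfl

theorem polyPart_eq_zero_iff {f : LaurentSeries K} :
    polyPart K f = 0 ↔ 1 ≤ f.orderTop := by
  simp only [HahnSeries.le_orderTop_iff_forall, HahnSeries.ext_iff, funext_iff, polyPart_coeff,
    HahnSeries.coeff_zero]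
  have hlt (j : ℤ) : (j : WithTop ℤ) < 1 ↔ j ≤ 0 := by
    rw [← WithTop.coe_one, WithTop.coe_lt_coe]
    omega
  simp only [hlt, ite_eq_right_iff]

theorem one_le_orderTop_fracPart (f : LaurentSeries K) : 1 ≤ (fracPart K f).orderTop :=
  polyPart_eq_zero_iff.1 (by rw [fracPart, polyPart_sub, polyPart_polyPart, sub_self])

theorem fareyAlg_of_orderTop_ne_zero (h : LaurentSeries K) {f : LaurentSeries K}
    (hf : f.orderTop ≠ 0) :
    fareyAlg K h f = f / (1 - polyPart K ((1 - h) * f⁻¹) * f) := by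
  rw [fareyAlg, if_neg (fdeg_eq_zero_iff.not.2 hf)]

theorem algMat_of_orderTop_ne_zero (h : LaurentSeries K) {f : LaurentSeries K}
    (hf : f.orderTop ≠ 0) :
    algMat K h f = !![1, 0; polyPart K ((1 - h) * f⁻¹), 1] := by
  rw [algMat, if_neg (fdeg_eq_zero_iff.not.2 hf)]

theorem algMat_of_orderTop_eq_zero (h : LaurentSeries K) {f : LaurentSeries K}
    (hf : f.orderTop = 0) :
    algMat K h f = !![0, 1; 1, polyPart K ((1 - h) * f⁻¹)] := by
  rw [algMat, if_pos (fdeg_eq_zero_iff.2 hf)]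

theorem polyPart_one_sub_mul_inv {h f : LaurentSeries K} (hh : h.orderTop = 1)
    (hf : f.orderTop = 0) :
    polyPart K ((1 - h) * f⁻¹) = polyPart K f⁻¹ := by
  have hhf : 1 ≤ (h * f⁻¹).orderTop := by
    rw [HahnSeries.orderTop_mul, hh, LaurentSeries.orderTop_inv (n := 0) (by exact_mod_cast hf)]
    simp
  rw [sub_mul, one_mul, polyPart_sub, polyPart_eq_zero_iff.2 hhf, sub_zero]

theorem orderTop_one_sub_polyPart_mul {h f : LaurentSeries K} (hh : h.orderTop = 1)
    (hf0 : f ≠ 0) (hf : 1 ≤ f.orderTop) :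
    (1 - polyPart K ((1 - h) * f⁻¹) * f).orderTop = 1 := by
  set u := (1 - h) * f⁻¹
  have hd : 1 - polyPart K u * f = h + fracPart K u * f := by
    have hu : u * f = 1 - h := by rw [mul_assoc, inv_mul_cancel₀ hf0, mul_one]
    rw [fracPart, sub_mul, hu]
    ring
  have hlt : h.orderTop < (fracPart K u * f).orderTop := by
    rw [hh, HahnSeries.orderTop_mul]
    calc (1 : WithTop ℤ) < 1 + 1 := by exact_mod_cast (by norm_num : (1 : ℤ) < 1 + 1)
      _ ≤ _ := add_le_add (one_le_orderTop_fracPart u) hf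
  rw [hd, HahnSeries.orderTop_add_eq_left hlt, hh]

theorem orderTop_fareyAlg {h f : LaurentSeries K} {n : ℤ} (hh : h.orderTop = 1) (hn : 0 ≤ n)
    (hf : f.orderTop = ((n + 1 : ℤ) : WithTop ℤ)) :
    (fareyAlg K h f).orderTop = n := by
  have hf0 : f ≠ 0 := HahnSeries.orderTop_ne_top.1 (by simp [hf])
  have hf1 : (1 : WithTop ℤ) ≤ f.orderTop := by
    rw [hf]
    exact_mod_cast (by omega : (1 : ℤ) ≤ n + 1)
  have hfn0 : f.orderTop ≠ 0 := by
    rw [hf]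
    exact_mod_cast (by omega : n + 1 ≠ 0)
  rw [fareyAlg_of_orderTop_ne_zero h hfn0, div_eq_mul_inv, HahnSeries.orderTop_mul, hf,
    LaurentSeries.orderTop_inv (orderTop_one_sub_polyPart_mul hh hf0 hf1)]
  norm_cast
  omega

theorem polyPart_inv_fareyAlg (h : LaurentSeries K) {f : LaurentSeries K} (hf : f.orderTop ≠ 0) :
    polyPart K (fareyAlg K h f)⁻¹ = polyPart K f⁻¹ - polyPart K ((1 - h) * f⁻¹) := by
  rw [fareyAlg_of_orderTop_ne_zero h hf, inv_div]
  obtain rfl | hf0 := eq_or_ne f 0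
  · simp [polyPart_eq_zero_iff]
  rw [sub_div, one_div, mul_div_cancel_right₀ _ hf0, polyPart_sub, polyPart_polyPart]

theorem shear_mul_cfMatrix {R : Type*} [Ring R] (a b : R) :
    !![1, 0; a, 1] * !![0, 1; 1, b - a] = !![0, 1; 1, b] := by
  rw [Matrix.mul_fin_two]
  simp

theorem algMat_prod_iterate_fareyAlg {h : LaurentSeries K} (hh : h.orderTop = 1) (m : ℕ)
    {f : LaurentSeries K} (hf : f.orderTop = ((m : ℤ) : WithTop ℤ)) :
    ((List.range (m + 1)).map (fun j => algMat K h ((fareyAlg K h)^[j] f))).prod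
      = !![0, 1; 1, polyPart K f⁻¹] := by
  induction m generalizing f with
  | zero =>
    have hf0 : f.orderTop = 0 := by exact_mod_cast hf
    simp only [zero_add, List.range_one, List.map_singleton, List.prod_singleton,
      Function.iterate_zero_apply]
    rw [algMat_of_orderTop_eq_zero h hf0, polyPart_one_sub_mul_inv hh hf0]
  | succ m ih =>
    have hf' : f.orderTop = ((m + 1 : ℤ) : WithTop ℤ) := by exact_mod_cast hf
    have hfn0 : f.orderTop ≠ 0 := by
      rw [hf']
      exact_mod_cast (by omega : (m : ℤ) + 1 ≠ 0)
    rw [List.prod_range_succ']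
    simp only [Function.iterate_succ_apply, Function.iterate_zero_apply]
    rw [ih (orderTop_fareyAlg hh (Int.natCast_nonneg m) hf'), polyPart_inv_fareyAlg h hfn0,
      algMat_of_orderTop_ne_zero h hfn0, shear_mul_cfMatrix]

end

theorem alg_matrix_product_first_block
    (h : LaurentSeries Fq) (hh : fdeg Fq h = ((-1 : ℤ) : WithBot ℤ))
    (f : LaurentSeries Fq)
    (m : ℕ) (hdeg : fdeg Fq f = ((-(m : ℤ) : ℤ) : WithBot ℤ)) :
    ((List.range (m + 1)).map (fun j => algMat Fq h ((fareyAlg Fq h)^[j] f))).prod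
      = !![0, 1; 1, polyPart Fq f⁻¹] :=
  algMat_prod_iterate_fareyAlg (by simpa using fdeg_eq_coe_iff.1 hh) m
    (by simpa using fdeg_eq_coe_iff.1 hdeg)

end
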